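/- For a commutative ring R, an element s ∈ R, and an R-module C, one has Ext¹_R(R[s⁻¹], C) = 0 if and only if for every sequence of elements a₀, a₁, a₂, … in C the infinite system of equations bₙ − s·bₙ₊₁ = aₙ (n ≥ 0) has a (possibly non-unique) solution b₀, b₁, b₂, … in C. -/

import Mathlib

open CategoryTheory Opposite Finsupp

noncomputable section ExtAux

variable (R : Type) [CommRing R] (s : R)

/-- The "shift" linear map on `ℕ →₀ R`. -/
def extShift : (ℕ →₀ R) →ₗ[R] (ℕ →₀ R) := Finsupp.lmapDomain R R Nat.succ

/-- The map `eₙ ↦ eₙ - s • eₙ₊₁`. -/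
def extD : (ℕ →₀ R) →ₗ[R] (ℕ →₀ R) := LinearMap.id - s • extShift R

lemma extD_single (n : ℕ) (r : R) :
    extD R s (Finsupp.single n r) = Finsupp.single n r - Finsupp.single (n + 1) (s * r) := by
  simp [extD, extShift, Finsupp.mapDomain_single, Finsupp.smul_single, Nat.succ_eq_add_one]

lemma extD_apply_zero (b : ℕ →₀ R) : extD R s b 0 = b 0 := by
  simp [extD, extShift, Finsupp.lmapDomain_apply]
  rw [Finsupp.mapDomain_notin_range]
  · simp
  · rintro ⟨k, hk⟩; exact Nat.succ_ne_zero k hk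

lemma extD_apply_succ (b : ℕ →₀ R) (k : ℕ) : extD R s b (k + 1) = b (k + 1) - s * b k := by
  simp [extD, extShift, Finsupp.lmapDomain_apply]
  rw [Finsupp.mapDomain_apply Nat.succ_injective b k]

lemma extD_injective : Function.Injective (extD R s) := by
  have key : ∀ b, extD R s b = 0 → b = 0 := by
    intro b hb
    ext k
    induction k with
    | zero => rw [← extD_apply_zero R s b, hb]
    | succ k ih =>
        have := congrArg (fun f => Finsupp.toFun f (k+1)) hb
        have h2 : extD R s b (k+1) = 0 := by rw [hb]; rfl
        rw [extD_apply_succ] at h2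
        have : b (k+1) = s * b k := by linear_combination h2
        rw [this, ih]
        simp
  intro x y h
  have : extD R s (x - y) = 0 := by rw [map_sub, h, sub_self]
  have := key _ this
  exact sub_eq_zero.mp this

/-- The augmentation `eₙ ↦ 1/sⁿ`. -/
def extG : (ℕ →₀ R) →ₗ[R] Localization.Away s :=
  Finsupp.linearCombination R (fun n => Localization.mk 1 ⟨s ^ n, n, rfl⟩)

lemma extG_single (n : ℕ) (r : R) :
    extG R s (Finsupp.single n r) = (Localization.mk r ⟨s ^ n, n, rfl⟩ : Localization.Away s) := by
  rw [extG, Finsupp.linearCombination_single, Localization.smul_mk, smul_eq_mul, mul_one]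

lemma extG_comp_extD : (extG R s).comp (extD R s) = 0 := by
  apply Finsupp.lhom_ext
  intro n r
  simp only [LinearMap.comp_apply, extD_single, map_sub, extG_single, LinearMap.zero_apply]
  rw [sub_eq_zero, Localization.mk_eq_mk_iff, Localization.r_iff_exists]
  exact ⟨1, by push_cast; ring⟩

lemma extG_extD_apply (x : ℕ →₀ R) : extG R s (extD R s x) = 0 := by
  have := congrArg (fun f => f x) (extG_comp_extD R s)
  simpa using this

lemma extG_surjective : Function.Surjective (extG R s) := by
  intro x
  refine Localization.induction_on x ?_
  rintro ⟨r, u⟩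
  obtain ⟨n, hn⟩ := u.2
  refine ⟨Finsupp.single n r, ?_⟩
  rw [extG_single]
  congr 1
  exact Subtype.ext hn

end ExtAux
section ExtAux2

variable (R : Type) [CommRing R] (s : R)

local notation "K" => LinearMap.range (extD R s)
local notation "π" => Submodule.mkQ (LinearMap.range (extD R s))

lemma extStep (n : ℕ) (r : R) :
    π (Finsupp.single n r) = π (Finsupp.single (n + 1) (s * r)) := by
  rw [Submodule.mkQ_apply, Submodule.mkQ_apply, Submodule.Quotient.eq]
  exact ⟨Finsupp.single n r, by rw [extD_single]⟩

lemma extSteps (n m : ℕ) (r : R) :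
    π (Finsupp.single n r) = π (Finsupp.single (n + m) (s ^ m * r)) := by
  induction m with
  | zero => simp
  | succ m ih =>
      rw [ih, extStep R s (n + m) (s ^ m * r)]
      congr 1
      congr 1
      ring

lemma extReduce (b : ℕ →₀ R) (N : ℕ) (hN : ∀ n ∈ b.support, n ≤ N) :
    π b = π (Finsupp.single N (b.sum fun n r => s ^ (N - n) * r)) := by
  have : ∀ n ∈ b.support, π (Finsupp.single n (b n)) =
      π (Finsupp.single N (s ^ (N - n) * b n)) := by
    intro n hn
    have h := extSteps R s n (N - n) (b n)
    rwa [Nat.add_sub_cancel' (hN n hn)] at h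
  conv_lhs => rw [← Finsupp.sum_single b]
  rw [map_finsuppSum, Finsupp.sum]
  conv_rhs => rw [Finsupp.sum, Finsupp.single_finset_sum, map_sum]
  exact Finset.sum_congr rfl this

lemma extKer_le_range : LinearMap.ker (extG R s) ≤ LinearMap.range (extD R s) := by
  intro b hb
  have hb' : extG R s b = 0 := hb
  set N := b.support.sup id with hNdef
  have hN : ∀ n ∈ b.support, n ≤ N := fun n hn => Finset.le_sup (f := id) hn
  set c := b.sum (fun n r => s ^ (N - n) * r) with hc
  have h1 : π b = π (Finsupp.single N c) := extReduce R s b N hN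
  have h2 : b - Finsupp.single N c ∈ K := by
    rw [← Submodule.Quotient.eq]
    exact h1
  have h3 : extG R s (Finsupp.single N c) = 0 := by
    obtain ⟨y, hy⟩ := h2
    have := congrArg (extG R s) hy
    rw [extG_extD_apply, map_sub, hb', zero_sub] at this
    exact neg_eq_zero.mp this.symm
  rw [extG_single, Localization.mk_eq_mk'] at h3
  obtain ⟨m, hm⟩ := (IsLocalization.mk'_eq_zero_iff _ _).mp h3
  obtain ⟨k, hk⟩ := m.2
  have hk' : s ^ k = (m : R) := hk
  have hsc : s ^ k * c = 0 := by rw [hk']; exact hm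
  have h4 : π (Finsupp.single N c) = 0 := by
    rw [extSteps R s N k c, hsc, Finsupp.single_zero, map_zero]
  have h5 : π b = 0 := h1.trans h4
  rwa [Submodule.mkQ_apply, Submodule.Quotient.mk_eq_zero] at h5

end ExtAux2
noncomputable section ExtCat

open CategoryTheory Limits

variable (R : Type) [CommRing R] (s : R)

/-- The objects of the two-term resolution. -/
def extXfun : ℕ → ModuleCat R
  | 0 => ModuleCat.of R (ℕ →₀ R)
  | 1 => ModuleCat.of R (ℕ →₀ R)
  | _ => ModuleCat.of R PUnit

/-- The differentials of the two-term resolution. -/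
def extdfun : ∀ n : ℕ, extXfun R (n + 1) ⟶ extXfun R n
  | 0 => ModuleCat.ofHom (extD R s)
  | (_ + 1) => 0

/-- The two-term resolution complex. -/
def extCx : ChainComplex (ModuleCat R) ℕ :=
  ChainComplex.of (extXfun R) (extdfun R s) (fun n => by
    show extdfun R s (n + 1) ≫ extdfun R s n = 0
    show (0 : extXfun R (n+2) ⟶ extXfun R (n+1)) ≫ extdfun R s n = 0
    exact zero_comp)

lemma extCx_d_1_0 : (extCx R s).d 1 0 = ModuleCat.ofHom (extD R s) :=
  ChainComplex.of_d (extXfun R) (extdfun R s) 0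

lemma extCx_d_2_1 : (extCx R s).d 2 1 = 0 :=
  ChainComplex.of_d (extXfun R) (extdfun R s) 1

lemma extDG_comp : ModuleCat.ofHom (extD R s) ≫ ModuleCat.ofHom (extG R s) = 0 := by
  exact ModuleCat.hom_ext (LinearMap.ext fun x => extG_extD_apply R s x)

lemma extCx_exactAt_succ (n : ℕ) : (extCx R s).ExactAt (n + 1) := by
  rw [HomologicalComplex.exactAt_iff' _ (n + 2) (n + 1) n (by simp) (by simp)]
  match n with
  | 0 =>
    rw [ShortComplex.exact_iff_mono _ (by exact extCx_d_2_1 R s)]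
    show Mono ((extCx R s).d 1 0)
    rw [extCx_d_1_0]
    exact (ModuleCat.mono_iff_injective (ModuleCat.ofHom (extD R s))).mpr (extD_injective R s)
  | (n + 1) =>
    apply ShortComplex.exact_of_isZero_X₂
    exact @ModuleCat.isZero_of_subsingleton R _ _ (inferInstanceAs (Subsingleton PUnit))

lemma extCx_d_comp_g :
    (extCx R s).d 1 0 ≫ ModuleCat.ofHom (extG R s) = 0 := by
  rw [extCx_d_1_0]; exact extDG_comp R s

/-- The projective resolution of `R[1/s]`. -/
def extRes : ProjectiveResolution (ModuleCat.of R (Localization.Away s)) where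
  complex := extCx R s
  projective n := by
    match n with
    | 0 => exact (IsProjective.iff_projective _).mp inferInstance
    | 1 => exact (IsProjective.iff_projective _).mp inferInstance
    | (n + 2) => exact (IsProjective.iff_projective _).mp inferInstance
  π := ((extCx R s).toSingle₀Equiv _).symm ⟨ModuleCat.ofHom (extG R s), extCx_d_comp_g R s⟩
  quasiIso := ⟨fun n => by
    cases n with
    | zero =>
      rw [ChainComplex.quasiIsoAt₀_iff, ShortComplex.quasiIso_iff_of_zeros']
      · refine (ShortComplex.exact_and_epi_g_iff_of_iso
            (S₂ := ShortComplex.mk (ModuleCat.ofHom (extD R s)) (ModuleCat.ofHom (extG R s))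
              (extDG_comp R s)) ?_).2 ⟨?_, ?_⟩
        · exact ShortComplex.isoMk (Iso.refl _) (Iso.refl _) (Iso.refl _)
            (by simp [extCx_d_1_0]; rfl) (by simp [ChainComplex.toSingle₀Equiv_symm_apply_f_zero]; rfl)
        · rw [ShortComplex.moduleCat_exact_iff]
          intro x hx
          exact extKer_le_range R s hx
        · exact (ModuleCat.epi_iff_surjective _).mpr (extG_surjective R s)
      all_goals rfl
    | succ n =>
      rw [quasiIsoAt_iff_exactAt']
      · apply extCx_exactAt_succ
      · apply ChainComplex.exactAt_succ_single_obj⟩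

lemma moduleCat_subsingleton_iff_isZero {R' : Type} [CommRing R'] (M : ModuleCat R') :
    Subsingleton M ↔ IsZero M := by
  constructor
  · intro h
    exact ModuleCat.isZero_of_subsingleton M
  · intro h
    have hid : 𝟙 M = (0 : M ⟶ M) := h.eq_of_src _ _
    constructor
    intro a b
    have ha : a = (𝟙 M : M ⟶ M) a := rfl
    have hb : b = (𝟙 M : M ⟶ M) b := rfl
    rw [ha, hb, hid]
    rfl

lemma extSurj_comp_iff (C : Type) [AddCommGroup C] [Module R C] :
    Function.Surjective (fun φ : (ℕ →₀ R) →ₗ[R] C => φ ∘ₗ extD R s) ↔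
      ∀ a : ℕ → C, ∃ b : ℕ → C, ∀ n : ℕ, b n - s • b (n + 1) = a n := by
  constructor
  · intro h a
    obtain ⟨ψ, hψ⟩ := h (Finsupp.linearCombination R a)
    refine ⟨fun n => ψ (Finsupp.single n 1), fun n => ?_⟩
    have h1 := congrArg (fun f => f (Finsupp.single n 1)) hψ
    simp only [LinearMap.comp_apply] at h1
    rw [extD_single, map_sub, Finsupp.linearCombination_single, one_smul] at h1
    have h2 : (Finsupp.single (n + 1) (s * 1) : ℕ →₀ R) = s • Finsupp.single (n + 1) 1 := by
      rw [Finsupp.smul_single, smul_eq_mul]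
    rw [h2, map_smul] at h1
    exact h1
  · intro h ψ
    obtain ⟨b, hb⟩ := h (fun n => ψ (Finsupp.single n 1))
    refine ⟨Finsupp.linearCombination R b, ?_⟩
    show (Finsupp.linearCombination R b) ∘ₗ extD R s = ψ
    apply Finsupp.lhom_ext
    intro n r
    rw [LinearMap.comp_apply, extD_single, map_sub, Finsupp.linearCombination_single,
      Finsupp.linearCombination_single]
    have h3 : ψ (Finsupp.single n r) = r • ψ (Finsupp.single n 1) := by
      rw [← map_smul, Finsupp.smul_single, smul_eq_mul, mul_one]
    rw [h3, ← hb n, smul_sub, smul_smul, mul_comm r s]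

end ExtCat

open CategoryTheory Opposite Limits

theorem ext1_localization_away_vanishes_iff (R : Type) [CommRing R] (s : R)
    (C : Type) [AddCommGroup C] [Module R C] :
    Subsingleton (((Ext R (ModuleCat R) 1).obj
        (op (ModuleCat.of R (Localization.Away s)))).obj (ModuleCat.of R C)) ↔
      ∀ a : ℕ → C, ∃ b : ℕ → C, ∀ n : ℕ, b n - s • b (n + 1) = a n := by
  have e := (extRes R s).isoExt (R := R) 1 (ModuleCat.of R C)
  set Y := ((extRes R s).complex.linearYonedaObj R (ModuleCat.of R C)) with hY
  haveI hsub2 : Subsingleton ((extCx R s).X 2) := by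
    show Subsingleton PUnit; infer_instance
  haveI hsub : Subsingleton ((extCx R s).X 2 ⟶ ModuleCat.of R C) := by
    constructor
    intro f g
    exact ModuleCat.hom_ext (LinearMap.ext fun x => by
      rw [Subsingleton.elim x 0, map_zero, map_zero])
  have hzero : IsZero (Y.X 2) := @ModuleCat.isZero_of_subsingleton R _ (Y.X 2) hsub
  have hg : Y.d 1 2 = 0 := hzero.eq_of_tgt _ _
  rw [moduleCat_subsingleton_iff_isZero, e.isZero_iff,
    ← HomologicalComplex.exactAt_iff_isZero_homology,
    HomologicalComplex.exactAt_iff' _ 0 1 2 (by simp) (by simp),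
    ShortComplex.exact_iff_epi _ hg, ModuleCat.epi_iff_surjective]
  have hd : (HomologicalComplex.sc' Y 0 1 2).f = Y.d 0 1 := rfl
  rw [hd, hY, ChainComplex.linearYonedaObj_d]
  have hcx : (extRes R s).complex = extCx R s := rfl
  rw [hcx, extCx_d_1_0]
  rw [← extSurj_comp_iff R s C]
  constructor
  · intro h φ
    obtain ⟨ψ, hψ⟩ := h (ModuleCat.ofHom φ)
    exact ⟨ψ.hom, congrArg ModuleCat.Hom.hom hψ⟩
  · intro h φ
    obtain ⟨ψ, hψ⟩ := h φ.hom
    exact ⟨ModuleCat.ofHom ψ, ModuleCat.hom_ext hψ⟩
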